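/- arXiv:2311.14952 — 4 statements merged into one kernel-verified Lean document; each statement's English description precedes it below -/
import Mathlib

section
/- For every fixed real λ > 0, the coefficient of s^n in the power series expansion of (1−s)^{−λ}, which equals (1/n!)·∏_{j=0}^{n-1}(λ + j), satisfies (1/n!)·∏_{j=0}^{n-1}(λ + j) = (n^{λ−1}/Γ(λ))·(1 + O(1/n)) as n → ∞; precisely, there exist constants C and N such that for all n ≥ N, |(Γ(λ)·∏_{j=0}^{n-1}(λ + j))/(n!·n^{λ−1}) − 1| ≤ C/n. -/
/-!
Since `Γ(λ)·∏_{j<n}(λ+j) = Γ(n+λ)` and `n!·n^{λ-1} = Γ(n)·n^λ`, the quantity is the ratio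
`Γ(n+λ) / (Γ(n)·n^λ)`. For `0 ≤ λ ≤ 1`, log-convexity of `Γ` on `[n, n+1]` gives Wendel's
inequality `n/(n+λ) ≤ Γ(n+λ)/(Γ(n)·n^λ) ≤ 1`, so the ratio is within `λ/n` of `1`. The functional
equation raises `λ` by one at the cost of a factor `1 + λ/n`, which keeps the error `O(1/n)`.
-/

open Real

namespace Real

theorem Gamma_mul_prod_range_add {a : ℝ} (ha : ∀ k : ℕ, a ≠ -k) (n : ℕ) :
    Gamma a * ∏ j ∈ Finset.range n, (a + j) = Gamma (a + n) := by
  induction n with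
  | zero => simp
  | succ n ih =>
    have hn : a + n ≠ 0 := fun h => ha n (by linarith)
    rw [Finset.prod_range_succ, ← mul_assoc, ih, Nat.cast_succ, ← add_assoc,
      Gamma_add_one hn, mul_comm]

theorem Gamma_add_le_Gamma_mul_rpow {x s : ℝ} (hx : 0 < x) (hs₀ : 0 ≤ s) (hs₁ : s ≤ 1) :
    Gamma (x + s) ≤ Gamma x * x ^ s := by
  have hconv := convexOn_log_Gamma.2 (Set.mem_Ioi.2 hx) (Set.mem_Ioi.2 (by linarith : 0 < x + 1))
    (sub_nonneg.2 hs₁) hs₀ (by ring)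
  simp only [Function.comp_apply, smul_eq_mul] at hconv
  have hG := Gamma_pos_of_pos hx
  rw [show (1 - s) * x + s * (x + 1) = x + s by ring, Gamma_add_one hx.ne',
    log_mul hx.ne' hG.ne'] at hconv
  rw [← exp_log (Gamma_pos_of_pos (by linarith : 0 < x + s)),
    ← exp_log (by positivity : 0 < Gamma x * x ^ s), log_mul hG.ne' (by positivity), log_rpow hx]
  exact exp_le_exp.2 (by linarith)

noncomputable def gammaRatio (s x : ℝ) : ℝ := Gamma (x + s) / (Gamma x * x ^ s)

theorem gammaRatio_le_one {x s : ℝ} (hx : 0 < x) (hs₀ : 0 ≤ s) (hs₁ : s ≤ 1) :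
    gammaRatio s x ≤ 1 :=
  div_le_one_of_le₀ (Gamma_add_le_Gamma_mul_rpow hx hs₀ hs₁)
    (by have := Gamma_pos_of_pos hx; positivity)

theorem div_add_le_gammaRatio {x s : ℝ} (hx : 0 < x) (hs₀ : 0 ≤ s) (hs₁ : s ≤ 1) :
    x / (x + s) ≤ gammaRatio s x := by
  have hxs : 0 < x + s := by linarith
  -- Wendel's lower bound: the upper bound at `x + s` with exponent `1 - s`.
  have h := Gamma_add_le_Gamma_mul_rpow hxs (sub_nonneg.2 hs₁) (by linarith)
  rw [show x + s + (1 - s) = x + 1 by ring, Gamma_add_one hx.ne'] at h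
  have hpow : x ^ s ≤ (x + s) ^ s := rpow_le_rpow hx.le (by linarith) hs₀
  have hsplit : (x + s) ^ (1 - s) * (x + s) ^ s = x + s := by
    rw [← rpow_add hxs]; simp
  have hG := Gamma_pos_of_pos hx
  rw [gammaRatio, div_le_div_iff₀ hxs (by positivity)]
  calc x * (Gamma x * x ^ s) ≤ Gamma (x + s) * (x + s) ^ (1 - s) * (x + s) ^ s := by
        rw [← mul_assoc]; gcongr
    _ = Gamma (x + s) * (x + s) := by rw [mul_assoc, hsplit]

theorem abs_gammaRatio_sub_one_le {x s : ℝ} (hx : 0 < x) (hs₀ : 0 ≤ s) (hs₁ : s ≤ 1) :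
    |gammaRatio s x - 1| ≤ s / x := by
  have hxs : 0 < x + s := by linarith
  have hlow := div_add_le_gammaRatio hx hs₀ hs₁
  have hgap : 1 - x / (x + s) ≤ s / x := by
    rw [one_sub_div hxs.ne', add_sub_cancel_left]
    exact div_le_div_of_nonneg_left hs₀ hx (by linarith)
  rw [abs_sub_comm, abs_of_nonneg (sub_nonneg.2 (gammaRatio_le_one hx hs₀ hs₁))]
  linarith

theorem gammaRatio_add_one {x : ℝ} (hx : x ≠ 0) (s : ℝ) (hxs : x + s ≠ 0) :
    gammaRatio (s + 1) x = gammaRatio s x * (1 + s / x) := by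
  rw [gammaRatio, gammaRatio, ← add_assoc, Gamma_add_one hxs, rpow_add_one hx]
  field_simp

theorem abs_gammaRatio_add_one_sub_one_le {x s C : ℝ} (hx : 1 ≤ x) (hs : 0 ≤ s)
    (h : |gammaRatio s x - 1| ≤ C / x) :
    |gammaRatio (s + 1) x - 1| ≤ (C * (1 + s) + s) / x := by
  have hx₀ : 0 < x := by linarith
  have hC : 0 ≤ C / x := (abs_nonneg _).trans h
  have hfac : 1 + s / x ≤ 1 + s := by gcongr; exact div_le_self hs hx
  rw [gammaRatio_add_one hx₀.ne' s (by linarith),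
    show gammaRatio s x * (1 + s / x) - 1 = (gammaRatio s x - 1) * (1 + s / x) + s / x by ring]
  calc |(gammaRatio s x - 1) * (1 + s / x) + s / x|
      ≤ |gammaRatio s x - 1| * (1 + s / x) + s / x := by
        refine (abs_add_le _ _).trans ?_
        rw [abs_mul, abs_of_nonneg (by positivity : 0 ≤ 1 + s / x),
          abs_of_nonneg (by positivity : 0 ≤ s / x)]
    _ ≤ C / x * (1 + s) + s / x := by gcongr
    _ = (C * (1 + s) + s) / x := by ring

theorem exists_abs_gammaRatio_sub_one_le {s : ℝ} (hs : 0 ≤ s) :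
    ∃ C, ∀ x ≥ 1, |gammaRatio s x - 1| ≤ C / x := by
  obtain ⟨k, hk⟩ := exists_nat_ge s
  induction k generalizing s with
  | zero =>
    exact ⟨s, fun x hx =>
      abs_gammaRatio_sub_one_le (by linarith) hs (by push_cast at hk; linarith)⟩
  | succ k ih =>
    rcases le_or_gt s 1 with hs₁ | hs₁
    · exact ⟨s, fun x hx => abs_gammaRatio_sub_one_le (by linarith) hs hs₁⟩
    obtain ⟨C, hC⟩ := ih (s := s - 1) (by linarith) (by push_cast at hk; linarith)
    refine ⟨C * (1 + (s - 1)) + (s - 1), fun x hx => ?_⟩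
    simpa only [sub_add_cancel] using
      abs_gammaRatio_add_one_sub_one_le hx (by linarith) (hC x hx)

theorem Gamma_mul_prod_range_div_factorial_mul_rpow {a : ℝ} (ha : ∀ k : ℕ, a ≠ -k) {n : ℕ}
    (hn : n ≠ 0) :
    Gamma a * (∏ j ∈ Finset.range n, (a + j)) / ((n.factorial : ℝ) * (n : ℝ) ^ (a - 1)) =
      gammaRatio a n := by
  have hn' : (n : ℝ) ≠ 0 := Nat.cast_ne_zero.2 hn
  rw [Gamma_mul_prod_range_add ha, gammaRatio, add_comm, ← Gamma_nat_eq_factorial,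
    Gamma_add_one hn', rpow_sub_one hn']
  field_simp

end Real

/-- For fixed `λ > 0`, the coefficient of `s^n` in `(1-s)^{-λ}`, namely the rising factorial
`λ(λ+1)⋯(λ+n−1)` divided by `n!`, satisfies
`(1/n!)·∏_{j<n}(λ+j) = (n^{λ−1}/Γ(λ))·(1 + O(1/n))`; precisely, there exist `C` and `N`
such that for all `n ≥ N`, `|Γ(λ)·∏_{j<n}(λ+j)/(n!·n^{λ−1}) − 1| ≤ C/n`. -/
theorem binomial_coeff_asymptotic (lam : ℝ) (hlam : 0 < lam) :
    ∃ C : ℝ, ∃ N : ℕ, ∀ n ≥ N,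
      |Real.Gamma lam * (∏ j ∈ Finset.range n, (lam + (j : ℝ))) /
          ((Nat.factorial n : ℝ) * (n : ℝ) ^ (lam - 1)) - 1| ≤ C / n := by
  obtain ⟨C, hC⟩ := exists_abs_gammaRatio_sub_one_le hlam.le
  refine ⟨C, 1, fun n hn => ?_⟩
  have hneg (k : ℕ) : lam ≠ -k := by have := k.cast_nonneg (α := ℝ); linarith
  rw [Gamma_mul_prod_range_div_factorial_mul_rpow hneg (by omega)]
  exact hC n (by exact_mod_cast hn)
end

section
/- Fix an integer a > 1 and let A = {a, 2a, 3a, …} = a·ℕ. Define p(k) as the coefficient of s^k in exp(∑_{m∈A} s^m/m), and B(k) = ∑_{l=1}^k l·p(l). Then B(k) = c·k^{1/a + 1}·(1 + O(1/k)) as k → ∞, where c = (a^{1/a}·(1/a + 1)·Γ(1/a))^{−1}; precisely, there exist constants C and N such that for all k ≥ N, |B(k)·k^{−(1/a+1)}/c − 1| ≤ C/k. -/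
open scoped Classical in
noncomputable def genFun (A : Set ℕ) : PowerSeries ℝ :=
  PowerSeries.mk fun m => if m ∈ A then (1 : ℝ) / m else 0

noncomputable def pCoeff (A : Set ℕ) (k : ℕ) : ℝ :=
  ∑ j ∈ Finset.range (k + 1),
    PowerSeries.coeff k (genFun A ^ j) / (Nat.factorial j : ℝ)

def posMultiples (a : ℕ) : Set ℕ := {m : ℕ | 0 < m ∧ a ∣ m}

open PowerSeries Finset

lemma coeff_genFun_pow_eq_zero {A : Set ℕ} (hA : 0 ∉ A) {n j : ℕ} (hj : n < j) :
    coeff n (genFun A ^ j) = 0 := by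
  have hX : (X : ℝ⟦X⟧) ∣ genFun A := by
    rw [X_dvd_iff]
    simp [genFun, hA, constantCoeff_mk]
  obtain ⟨h, hh⟩ := hX
  rw [hh, mul_pow]
  exact (X_pow_dvd_iff.mp (dvd_mul_right _ _)) n hj

lemma pCoeff_rec (A : Set ℕ) (hA : 0 ∉ A) (k : ℕ) :
    (k + 1 : ℝ) * pCoeff A (k + 1) =
      ∑ i ∈ Finset.range (k + 1),
        (coeff (k - i + 1) (genFun A) * (k - i + 1 : ℕ)) * pCoeff A i := by
  set g := genFun A with hg
  -- step 1: express LHS via derivative coefficients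
  have h1 : (k + 1 : ℝ) * pCoeff A (k + 1)
      = ∑ j ∈ Finset.range (k + 2), coeff k (PowerSeries.derivative ℝ (g ^ j)) / (Nat.factorial j : ℝ) := by
    rw [pCoeff, Finset.mul_sum]
    refine Finset.sum_congr rfl fun j _ => ?_
    rw [coeff_derivative]
    ring
  have h2 : ∀ j : ℕ, PowerSeries.derivative ℝ (g ^ j)
      = j • (g ^ (j-1) * PowerSeries.derivative ℝ g) := by
    intro j
    rw [Derivation.leibniz_pow, smul_eq_mul]
  -- step 2: reindex j = i + 1
  have h3 : (k + 1 : ℝ) * pCoeff A (k + 1)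
      = ∑ i ∈ Finset.range (k + 1), coeff k (g ^ i * PowerSeries.derivative ℝ g) / (Nat.factorial i : ℝ) := by
    rw [h1, Finset.sum_range_succ']
    simp only [h2]
    simp only [zero_smul, map_zero, zero_div, add_zero]
    refine Finset.sum_congr rfl fun i _ => ?_
    rw [map_nsmul, nsmul_eq_mul, Nat.factorial_succ, Nat.add_sub_cancel]
    have hi : (Nat.factorial i : ℝ) ≠ 0 := by positivity
    push_cast
    field_simp
  -- step 3: expand product coefficient and swap sums
  have h4 : ∀ i : ℕ, coeff k (g ^ i * PowerSeries.derivative ℝ g)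
      = ∑ n ∈ Finset.range (k + 1), coeff n (g ^ i) * coeff (k - n) (PowerSeries.derivative ℝ g) := by
    intro i
    rw [coeff_mul, Finset.Nat.sum_antidiagonal_eq_sum_range_succ (fun x y => coeff x (g ^ i) * coeff y (PowerSeries.derivative ℝ g))]
  have h5 : ∀ n, n ≤ k → ∑ i ∈ Finset.range (k + 1), coeff n (g ^ i) / (Nat.factorial i : ℝ) = pCoeff A n := by
    intro n hn
    rw [pCoeff]
    symm
    apply Finset.sum_subset
    · exact Finset.range_subset_range.mpr (by omega)
    · intro i _ hi
      rw [coeff_genFun_pow_eq_zero hA (by simp at hi ⊢; omega)]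
      simp
  calc (k + 1 : ℝ) * pCoeff A (k + 1)
      = ∑ i ∈ Finset.range (k + 1), ∑ n ∈ Finset.range (k + 1),
          coeff n (g ^ i) * coeff (k - n) (PowerSeries.derivative ℝ g) / (Nat.factorial i : ℝ) := by
        rw [h3]; refine Finset.sum_congr rfl fun i _ => ?_; rw [h4, Finset.sum_div]
    _ = ∑ n ∈ Finset.range (k + 1), coeff (k - n) (PowerSeries.derivative ℝ g) *
          ∑ i ∈ Finset.range (k + 1), coeff n (g ^ i) / (Nat.factorial i : ℝ) := by
        rw [Finset.sum_comm]
        refine Finset.sum_congr rfl fun n _ => ?_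
        rw [Finset.mul_sum]
        refine Finset.sum_congr rfl fun i _ => ?_
        ring
    _ = ∑ i ∈ Finset.range (k + 1), (coeff (k - i + 1) g * (k - i + 1 : ℕ)) * pCoeff A i := by
        refine Finset.sum_congr rfl fun n hn => ?_
        rw [h5 n (by simp at hn; omega), coeff_derivative]
        push_cast
        ring

lemma zero_not_mem_posMultiples (a : ℕ) : 0 ∉ posMultiples a := by
  simp [posMultiples]

lemma w_eq (a m : ℕ) (hm : 0 < m) :
    coeff m (genFun (posMultiples a)) * (m : ℕ) = if a ∣ m then 1 else 0 := by
  classical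
  have : coeff m (genFun (posMultiples a)) = if 0 < m ∧ a ∣ m then (1:ℝ)/m else 0 := by
    simp [genFun, coeff_mk, posMultiples, Set.mem_setOf_eq]
  rw [this]
  have hm' : (m : ℝ) ≠ 0 := by positivity
  by_cases h : a ∣ m <;> simp [h, hm] <;> field_simp

/-- q n = ∏_{i=1}^n (1/a + i - 1)/i, defined recursively. -/
noncomputable def qSeq (a : ℕ) : ℕ → ℝ
  | 0 => 1
  | n+1 => qSeq a n * (a*n+1) / (a*(n+1))

lemma qSeq_pos (a : ℕ) (ha : 0 < a) : ∀ n, 0 < qSeq a n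
  | 0 => one_pos
  | n+1 => by
    have := qSeq_pos a ha n
    have ha' : (0:ℝ) < a := by positivity
    rw [qSeq]
    positivity

lemma sum_qSeq (a : ℕ) (ha : 0 < a) (N : ℕ) :
    ∑ m ∈ Finset.range N, qSeq a m = a * N * qSeq a N := by
  induction N with
  | zero => simp
  | succ N ih =>
    rw [Finset.sum_range_succ, ih, qSeq]
    have h1 : ((a:ℝ)*(N+1)) ≠ 0 := by positivity
    field_simp
    push_cast
    ring

lemma sum_mult (a : ℕ) (ha : 0 < a) (f : ℕ → ℝ) (N : ℕ) :
    ∑ i ∈ Finset.range (a*N), (if a ∣ i then f (i/a) else 0) = ∑ m ∈ Finset.range N, f m := by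
  induction N with
  | zero => simp
  | succ N ih =>
    have hsplit : a*(N+1) = a*N + a := by ring
    rw [hsplit, Finset.range_eq_Ico,
      ← Finset.sum_Ico_consecutive _ (Nat.zero_le _) (Nat.le_add_right _ _),
      ← Finset.range_eq_Ico, ih, Finset.sum_range_succ]
    congr 1
    rw [Finset.sum_eq_single (a*N)]
    · rw [if_pos (Dvd.intro N rfl), Nat.mul_div_cancel_left N ha]
    · intro i hi hne
      rw [if_neg]
      rintro ⟨c, rfl⟩
      simp only [Finset.mem_Ico] at hi
      have : c = N := by
        rcases Nat.lt_or_ge c N with h | h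
        · nlinarith [hi.1]
        · rcases Nat.lt_or_ge c (N+1) with h2 | h2
          · omega
          · nlinarith [hi.2]
      exact hne (by rw [this])
    · intro h
      exact absurd (Finset.mem_Ico.mpr ⟨le_rfl, by omega⟩) h

lemma pCoeff_zero (A : Set ℕ) : pCoeff A 0 = 1 := by
  simp [pCoeff]

lemma pCoeff_eq (a : ℕ) (ha : 1 < a) :
    ∀ k, pCoeff (posMultiples a) k = if a ∣ k then qSeq a (k/a) else 0 := by
  intro k
  induction k using Nat.strong_induction_on with
  | _ k ih =>
  match k with
  | 0 => simp [pCoeff_zero, qSeq]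
  | Nat.succ k => ?_
  have ha0 : 0 < a := by omega
  have hrec := pCoeff_rec (posMultiples a) (zero_not_mem_posMultiples a) k
  have hterm : ∀ i ∈ Finset.range (k+1),
      (coeff (k - i + 1) (genFun (posMultiples a)) * (k - i + 1 : ℕ)) * pCoeff (posMultiples a) i
      = (if a ∣ (k + 1 - i) then (1:ℝ) else 0) * (if a ∣ i then qSeq a (i/a) else 0) := by
    intro i hi
    simp only [Finset.mem_range] at hi
    have hik : i ≤ k := by omega
    have h1 : k - i + 1 = k + 1 - i := by omega
    rw [w_eq a _ (by omega), ih i (by omega), h1]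
  rw [Finset.sum_congr rfl hterm] at hrec
  by_cases hdvd : a ∣ (k+1)
  · -- k+1 = a*N
    obtain ⟨N, hN⟩ := hdvd
    have hN1 : 1 ≤ N := by
      rcases N with _|N
      · omega
      · omega
    have hterm2 : ∀ i ∈ Finset.range (k+1),
        (if a ∣ (k + 1 - i) then (1:ℝ) else 0) * (if a ∣ i then qSeq a (i/a) else 0)
        = (if a ∣ i then qSeq a (i/a) else 0) := by
      intro i hi
      simp only [Finset.mem_range] at hi
      by_cases h : a ∣ i
      · rw [if_pos (Nat.dvd_sub ⟨N, hN⟩ h), if_pos h, one_mul]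
      · rw [if_neg h, mul_zero]
    rw [Finset.sum_congr rfl hterm2] at hrec
    have hrange : k + 1 = a * N := hN
    rw [hrange] at hrec
    rw [sum_mult a ha0 _ N, sum_qSeq a ha0 N] at hrec
    have hkN : ((k:ℝ) + 1) = (a:ℝ) * N := by
      have : ((k+1 : ℕ) : ℝ) = ((a*N : ℕ) : ℝ) := by rw [hrange]
      push_cast at this
      linarith
    rw [if_pos ⟨N, hN⟩]
    have hdiv : (k+1)/a = N := by rw [hrange, Nat.mul_div_cancel_left N ha0]
    rw [hdiv]
    have hk1 : ((k:ℝ)+1) ≠ 0 := by positivity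
    rw [hkN] at hrec
    have haN : ((a:ℝ)*N) ≠ 0 := by
      have h1 : (1:ℝ) ≤ (N:ℝ) := by exact_mod_cast hN1
      have ha' : (0:ℝ) < a := by positivity
      nlinarith
    show pCoeff (posMultiples a) (k+1) = qSeq a N
    rw [hrange]
    exact mul_left_cancel₀ haN hrec
  · -- not divisible: all terms vanish
    have hterm2 : ∀ i ∈ Finset.range (k+1),
        (if a ∣ (k + 1 - i) then (1:ℝ) else 0) * (if a ∣ i then qSeq a (i/a) else 0) = 0 := by
      intro i hi
      simp only [Finset.mem_range] at hi
      by_cases h : a ∣ i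
      · rw [if_neg, zero_mul]
        intro hd
        exact hdvd (by
          have : a ∣ (k + 1 - i) + i := Nat.dvd_add hd h
          rwa [Nat.sub_add_cancel (by omega)] at this)
      · rw [if_neg h, mul_zero]
    rw [Finset.sum_congr rfl hterm2, Finset.sum_const_zero] at hrec
    rw [if_neg hdvd]
    have hk1 : ((k:ℝ)+1) ≠ 0 := by positivity
    exact (mul_eq_zero.mp hrec).resolve_left hk1

lemma B_eq (a : ℕ) (ha : 1 < a) (k : ℕ) :
    ∑ l ∈ Finset.Icc 1 k, (l : ℝ) * pCoeff (posMultiples a) l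
      = (a : ℝ) * (k/a : ℕ) * ((a:ℝ)*(k/a : ℕ)+1) * qSeq a (k/a) / ((a:ℝ)+1) := by
  have ha0 : 0 < a := by omega
  induction k with
  | zero => simp
  | succ k ih =>
    rw [Finset.sum_Icc_succ_top (by omega : 1 ≤ k + 1), ih, pCoeff_eq a ha]
    rw [Nat.succ_div]
    by_cases hdvd : a ∣ (k+1)
    · rw [if_pos hdvd, if_pos hdvd]
      set N := k / a with hNdef
      have hk1 : (k:ℝ)+1 = (a:ℝ)*(N+1) := by
        have h1 : k + 1 = a * (N+1) := by
          have h2 := (Nat.succ_div (a := k) (b := a))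
          rw [if_pos hdvd] at h2
          have h3 : (k+1)/a * a = k+1 := Nat.div_mul_cancel hdvd
          rw [h2] at h3
          rw [← h3, hNdef]
          ring
        exact_mod_cast congrArg (Nat.cast : ℕ → ℝ) h1
      have hq : qSeq a (N+1) = qSeq a N * ((a:ℝ)*N+1) / ((a:ℝ)*(N+1)) := by
        simp [qSeq]
      push_cast
      rw [hk1, hq]
      have h1 : ((a:ℝ)+1) ≠ 0 := by positivity
      have h2 : ((a:ℝ)*(N+1)) ≠ 0 := by positivity
      field_simp
      ring
    · rw [if_neg hdvd, if_neg hdvd]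
      push_cast
      ring

lemma qSeq_gamma (a : ℕ) (ha : 1 < a) (N : ℕ) :
    qSeq a N = Real.Gamma ((N : ℝ) + 1/a) / (Real.Gamma (1/a) * (Nat.factorial N : ℝ)) := by
  have ha' : (0:ℝ) < a := by positivity
  have hr : (0:ℝ) < 1/a := by positivity
  have hΓ : 0 < Real.Gamma (1/a) := Real.Gamma_pos_of_pos hr
  induction N with
  | zero =>
    simp only [qSeq, Nat.cast_zero, zero_add, Nat.factorial_zero, Nat.cast_one, mul_one]
    rw [div_self hΓ.ne']
  | succ N ih =>
    have hne : ((N:ℝ) + 1/a) ≠ 0 := by positivity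
    have hadd : Real.Gamma ((N:ℝ) + 1 + 1/a) = ((N:ℝ) + 1/a) * Real.Gamma ((N:ℝ) + 1/a) := by
      rw [show (N:ℝ) + 1 + 1/a = ((N:ℝ) + 1/a) + 1 by ring, Real.Gamma_add_one hne]
    rw [show qSeq a (N+1) = qSeq a N * ((a:ℝ)*N+1) / ((a:ℝ)*(N+1)) from by simp [qSeq], ih]
    push_cast
    rw [hadd, Nat.factorial_succ]
    have h1 : (Nat.factorial N : ℝ) ≠ 0 := by positivity
    have h2 : ((N:ℝ)+1) ≠ 0 := by positivity
    push_cast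
    field_simp

section Gautschi
open Real
private lemma gautschi_upper (r : ℝ) (hr0 : 0 < r) (hr1 : r < 1) (x : ℝ) (hx : 1 ≤ x) :
    Gamma (x + r) ≤ Gamma (x + 1) * x ^ (r - 1) := by
  have hx0 : (0:ℝ) < x := by linarith
  have h1 : Gamma (x + 1) = x * Gamma x := Real.Gamma_add_one hx0.ne'
  have hc := Real.convexOn_log_Gamma.2 (Set.mem_Ioi.mpr hx0)
    (Set.mem_Ioi.mpr (by linarith : (0:ℝ) < x + 1)) (by linarith : (0:ℝ) ≤ 1 - r) hr0.le
    (by ring)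
  simp only [smul_eq_mul, Function.comp_apply] at hc
  have harg : (1 - r) * x + r * (x + 1) = x + r := by ring
  rw [harg] at hc
  have hΓx : 0 < Gamma x := Real.Gamma_pos_of_pos hx0
  have hΓx1 : 0 < Gamma (x + 1) := Real.Gamma_pos_of_pos (by linarith)
  have hΓxr : 0 < Gamma (x + r) := Real.Gamma_pos_of_pos (by linarith)
  have hlog : Real.log (Gamma (x + 1)) = Real.log x + Real.log (Gamma x) := by
    rw [h1, Real.log_mul hx0.ne' hΓx.ne']
  have hineq : Real.log (Gamma (x + r)) ≤ Real.log (Gamma (x + 1)) + (r - 1) * Real.log x := by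
    nlinarith [hc, hlog]
  calc Gamma (x + r) = Real.exp (Real.log (Gamma (x + r))) := (Real.exp_log hΓxr).symm
    _ ≤ Real.exp (Real.log (Gamma (x + 1)) + (r - 1) * Real.log x) := Real.exp_le_exp.mpr hineq
    _ = Gamma (x + 1) * x ^ (r - 1) := by
        rw [Real.exp_add, Real.exp_log hΓx1, Real.rpow_def_of_pos hx0, mul_comm (Real.log x)]

private lemma gautschi_lower (r : ℝ) (hr0 : 0 < r) (hr1 : r < 1) (x : ℝ) (hx : 1 ≤ x) :
    Gamma (x + 1) * (x + r) ^ (r - 1) ≤ Gamma (x + r) := by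
  have hx0 : (0:ℝ) < x := by linarith
  have hxr : (0:ℝ) < x + r := by linarith
  have h1 : Gamma (x + r + 1) = (x + r) * Gamma (x + r) := Real.Gamma_add_one hxr.ne'
  have hc := Real.convexOn_log_Gamma.2 (Set.mem_Ioi.mpr hxr)
    (Set.mem_Ioi.mpr (by linarith : (0:ℝ) < x + r + 1)) hr0.le (by linarith : (0:ℝ) ≤ 1 - r)
    (by ring)
  simp only [smul_eq_mul, Function.comp_apply] at hc
  have harg : r * (x + r) + (1 - r) * (x + r + 1) = x + 1 := by ring
  rw [harg] at hc
  have hΓxr : 0 < Gamma (x + r) := Real.Gamma_pos_of_pos (by linarith)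
  have hΓx1 : 0 < Gamma (x + 1) := Real.Gamma_pos_of_pos (by linarith)
  have hlog : Real.log (Gamma (x + r + 1)) = Real.log (x + r) + Real.log (Gamma (x + r)) := by
    rw [h1, Real.log_mul hxr.ne' hΓxr.ne']
  have hineq : Real.log (Gamma (x + 1)) + (r - 1) * Real.log (x + r) ≤ Real.log (Gamma (x + r)) := by
    nlinarith [hc, hlog]
  calc Gamma (x + 1) * (x + r) ^ (r - 1)
      = Real.exp (Real.log (Gamma (x + 1)) + (r - 1) * Real.log (x + r)) := by
        rw [Real.exp_add, Real.exp_log hΓx1, Real.rpow_def_of_pos hxr, mul_comm (Real.log (x + r))]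
    _ ≤ Real.exp (Real.log (Gamma (x + r))) := Real.exp_le_exp.mpr hineq
    _ = Gamma (x + r) := Real.exp_log hΓxr

end Gautschi

set_option maxHeartbeats 1000000 in
/-- For `A = aℕ` with `a > 1`, `B(k) = ∑_{l=1}^k l·p(l)` satisfies
`B(k) = c·k^{1/a+1}·(1 + O(1/k))` where `c = (a^{1/a}·(1/a+1)·Γ(1/a))⁻¹`. -/
theorem BFun_multiples_asymptotic (a : ℕ) (ha : 1 < a) :
    ∃ C : ℝ, ∃ N : ℕ, ∀ k ≥ N,
      |(∑ l ∈ Finset.Icc 1 k, (l : ℝ) * pCoeff (posMultiples a) l) *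
            (k : ℝ) ^ (-(1 / (a : ℝ) + 1)) /
            ((a : ℝ) ^ (1 / (a : ℝ)) * (1 / (a : ℝ) + 1) * Real.Gamma (1 / (a : ℝ)))⁻¹ -
          1| ≤ C / k := by
  have ha0 : 0 < a := by omega
  have hA : (0:ℝ) < a := by positivity
  have hr0 : (0:ℝ) < 1 / a := by positivity
  have hr1 : 1 / (a:ℝ) < 1 := by
    rw [div_lt_one hA]; exact_mod_cast ha
  have hΓr : 0 < Real.Gamma (1/(a:ℝ)) := Real.Gamma_pos_of_pos hr0
  refine ⟨2*a, 2*a, fun k hk => ?_⟩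
  set N : ℕ := k / a with hNdef
  have hk0 : 0 < k := by omega
  have hkR : (0:ℝ) < k := by positivity
  have hN1 : 1 ≤ N := by
    rw [hNdef]; exact Nat.one_le_div_iff ha0 |>.mpr (by omega)
  have hNR : (1:ℝ) ≤ (N:ℝ) := by exact_mod_cast hN1
  have hNR0 : (0:ℝ) < (N:ℝ) := by linarith
  have haN_le : (a:ℝ) * N ≤ k := by
    have h := Nat.mul_div_le k a
    have : a * N ≤ k := by rw [hNdef]; exact h
    exact_mod_cast this
  have hmodR : (a:ℝ) * N + (k % a : ℕ) = k := by
    have h := Nat.div_add_mod k a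
    rw [← hNdef] at h
    exact_mod_cast h
  have hk_lt : (k:ℝ) < (a:ℝ) * N + a := by
    have h2 : k % a < a := Nat.mod_lt k ha0
    have h2R : ((k % a : ℕ) : ℝ) < a := by exact_mod_cast h2
    linarith
  have hk2a : 2 * (a:ℝ) ≤ k := by exact_mod_cast hk
  have hk2aN : (k:ℝ) ≤ 2 * ((a:ℝ) * N) := by nlinarith
  have hfactpos : (0:ℝ) < (Nat.factorial N : ℝ) := by positivity
  have hNrpos : (0:ℝ) < (N:ℝ) ^ (1/(a:ℝ)) := Real.rpow_pos_of_pos hNR0 _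
  have hΓNr : 0 < Real.Gamma ((N:ℝ) + 1/a) := Real.Gamma_pos_of_pos (by linarith)
  have hgamfact : Real.Gamma ((N:ℝ) + 1) = (Nat.factorial N : ℝ) := Real.Gamma_nat_eq_factorial N
  -- key factorization
  have key : (∑ l ∈ Finset.Icc 1 k, (l : ℝ) * pCoeff (posMultiples a) l) *
            (k : ℝ) ^ (-(1 / (a : ℝ) + 1)) /
            ((a : ℝ) ^ (1 / (a : ℝ)) * (1 / (a : ℝ) + 1) * Real.Gamma (1 / (a : ℝ)))⁻¹
      = (((a:ℝ) * N / k) ^ (1/(a:ℝ) + 1)) *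
        (((N:ℝ) + 1/a) * Real.Gamma ((N:ℝ) + 1/a) / ((N:ℝ) ^ (1/(a:ℝ)) * (Nat.factorial N : ℝ))) := by
    rw [div_inv_eq_mul, B_eq a ha k, qSeq_gamma a ha (k/a), ← hNdef]
    have h1 : ((a:ℝ) * N / k) ^ (1/(a:ℝ)+1)
        = (a:ℝ)^(1/(a:ℝ)) * (a:ℝ) * ((N:ℝ)^(1/(a:ℝ)) * N) / (k:ℝ)^(1/(a:ℝ)+1) := by
      rw [Real.div_rpow (by positivity) hkR.le, Real.mul_rpow hA.le hNR0.le,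
        Real.rpow_add hA, Real.rpow_one, Real.rpow_add hNR0, Real.rpow_one]
    have h4 : (k:ℝ)^(-(1/(a:ℝ)+1)) = ((k:ℝ)^(1/(a:ℝ)+1))⁻¹ := by
      rw [Real.rpow_neg hkR.le]
    have h5 : (0:ℝ) < (k:ℝ)^(1/(a:ℝ)+1) := Real.rpow_pos_of_pos hkR _
    rw [h1, h4]
    obtain ⟨G1, hG1⟩ : ∃ x, Real.Gamma ((N:ℝ) + 1/a) = x := ⟨_, rfl⟩
    obtain ⟨G2, hG2⟩ : ∃ x, Real.Gamma (1/(a:ℝ)) = x := ⟨_, rfl⟩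
    obtain ⟨x, hx⟩ : ∃ x, (N:ℝ)^(1/(a:ℝ)) = x := ⟨_, rfl⟩
    obtain ⟨y, hy⟩ : ∃ x, (k:ℝ)^(1/(a:ℝ)+1) = x := ⟨_, rfl⟩
    obtain ⟨p, hp⟩ : ∃ x, (a:ℝ)^(1/(a:ℝ)) = x := ⟨_, rfl⟩
    rw [hG1, hG2, hx, hy, hp]
    rw [hG2] at hΓr
    rw [hx] at hNrpos
    rw [hy] at h5
    field_simp
    ring
  rw [key]
  -- bounds on u and R
  have hubR : ((N:ℝ) + 1/a) * Real.Gamma ((N:ℝ) + 1/a) / ((N:ℝ) ^ (1/(a:ℝ)) * (Nat.factorial N : ℝ))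
      ≤ ((N:ℝ) + 1/a) / N := by
    have hg := gautschi_upper (1/(a:ℝ)) hr0 hr1 (N:ℝ) hNR
    rw [hgamfact] at hg
    have hNrm : (N:ℝ)^(1/(a:ℝ) - 1) = (N:ℝ)^(1/(a:ℝ)) / N := by
      rw [Real.rpow_sub hNR0, Real.rpow_one]
    rw [hNrm] at hg
    rw [div_le_div_iff₀ (by positivity) (by positivity)]
    have hNr_nonneg : (0:ℝ) ≤ (N:ℝ) + 1/a := by positivity
    calc ((N:ℝ) + 1/a) * Real.Gamma ((N:ℝ) + 1/a) * (N:ℝ)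
        ≤ ((N:ℝ) + 1/a) * ((Nat.factorial N : ℝ) * ((N:ℝ)^(1/(a:ℝ)) / N)) * (N:ℝ) := by
          have := mul_le_mul_of_nonneg_left hg hNr_nonneg
          nlinarith
      _ = ((N:ℝ) + 1/a) * ((N:ℝ)^(1/(a:ℝ)) * (Nat.factorial N : ℝ)) := by
          field_simp
  have hlbR : (1:ℝ) ≤ ((N:ℝ) + 1/a) * Real.Gamma ((N:ℝ) + 1/a) / ((N:ℝ) ^ (1/(a:ℝ)) * (Nat.factorial N : ℝ)) := by
    have hg := gautschi_lower (1/(a:ℝ)) hr0 hr1 (N:ℝ) hNR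
    rw [hgamfact] at hg
    have hNrpos2 : (0:ℝ) < (N:ℝ) + 1/a := by positivity
    have hpow : ((N:ℝ) + 1/a) * ((N:ℝ) + 1/a)^(1/(a:ℝ) - 1) = ((N:ℝ) + 1/a)^(1/(a:ℝ)) := by
      rw [Real.rpow_sub hNrpos2, Real.rpow_one]
      field_simp
    have hmono : (N:ℝ)^(1/(a:ℝ)) ≤ ((N:ℝ) + 1/a)^(1/(a:ℝ)) :=
      Real.rpow_le_rpow hNR0.le (by linarith) hr0.le
    rw [one_le_div (by positivity)]
    calc (N:ℝ)^(1/(a:ℝ)) * (Nat.factorial N : ℝ)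
        ≤ ((N:ℝ) + 1/a)^(1/(a:ℝ)) * (Nat.factorial N : ℝ) := by nlinarith
      _ = ((N:ℝ) + 1/a) * (((Nat.factorial N : ℝ)) * ((N:ℝ) + 1/a)^(1/(a:ℝ) - 1)) := by
          rw [← hpow]; ring
      _ ≤ ((N:ℝ) + 1/a) * Real.Gamma ((N:ℝ) + 1/a) := by nlinarith
  have hu1 : (((a:ℝ) * N / k) ^ (1/(a:ℝ) + 1)) ≤ 1 := by
    apply Real.rpow_le_one (by positivity) _ (by positivity)
    rw [div_le_one hkR]
    exact haN_le
  have hu0 : (0:ℝ) ≤ (((a:ℝ) * N / k) ^ (1/(a:ℝ) + 1)) := by positivity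
  have hu2 : 1 - 2*(a:ℝ)/k ≤ (((a:ℝ) * N / k) ^ (1/(a:ℝ) + 1)) := by
    have hak : (a:ℝ)/k ≤ 1/2 := by
      rw [div_le_div_iff₀ hkR (by norm_num)]
      linarith
    have hber := one_add_mul_self_le_rpow_one_add (show (-1:ℝ) ≤ -((a:ℝ)/k) by linarith)
      (show (1:ℝ) ≤ 1/(a:ℝ) + 1 by linarith)
    have hbase : (0:ℝ) ≤ 1 + -((a:ℝ)/k) := by linarith
    have hmono : (1 + -((a:ℝ)/k)) ^ (1/(a:ℝ) + 1) ≤ (((a:ℝ) * N / k) ^ (1/(a:ℝ) + 1)) := by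
      apply Real.rpow_le_rpow hbase _ (by positivity)
      rw [le_div_iff₀ hkR]
      have hexp : (1 + -((a:ℝ)/k)) * k = k - a := by field_simp; ring
      linarith
    have h2 : 1 - 2*(a:ℝ)/k ≤ 1 + (1/(a:ℝ) + 1) * -((a:ℝ)/k) := by
      have : (1/(a:ℝ) + 1) * ((a:ℝ)/k) ≤ 2 * ((a:ℝ)/k) := by
        apply mul_le_mul_of_nonneg_right (by linarith) (by positivity)
      have h3 : 2 * ((a:ℝ)/k) = 2*(a:ℝ)/k := by ring
      nlinarith
    linarith
  have hNk : 1/(N:ℝ) ≤ 2*(a:ℝ)/k := by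
    rw [div_le_div_iff₀ hNR0 hkR]
    nlinarith
  have hRub2 : ((N:ℝ) + 1/a) / N ≤ 1 + 2*(a:ℝ)/k := by
    have h0 : ((N:ℝ) + 1/a) / N = 1 + (1/(a:ℝ))/N := by field_simp
    have h1 : (1/(a:ℝ))/N ≤ 1/(N:ℝ) := by
      gcongr
      all_goals linarith
    rw [h0]
    linarith
  set u := ((a:ℝ) * N / k) ^ (1/(a:ℝ) + 1) with hu
  set R := ((N:ℝ) + 1/a) * Real.Gamma ((N:ℝ) + 1/a) / ((N:ℝ) ^ (1/(a:ℝ)) * (Nat.factorial N : ℝ)) with hR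
  rw [abs_le]
  constructor
  · have h := mul_nonneg hu0 (sub_nonneg.mpr hlbR)
    nlinarith
  · have hR0 : (0:ℝ) ≤ R := le_trans zero_le_one hlbR
    have h := mul_le_of_le_one_left hR0 hu1
    linarith [hubR.trans hRub2]
end

section
/- Let ρ > 0, β ∈ (0,1) and C > 0 and suppose B : ℕ → ℝ satisfies 0 ≤ B(k) ≤ C·k^{ρ+1} for all k ≥ 1. Let a(k,n) = ∏_{j=1}^{k-1}(1 − j/n) and set s(n) = ⌊n^{2/(3+β)}⌋. Then ∑_{k=s(n)+1}^{n} a(k,n)·k·B(k) = O(n^{(3+ρ−β)/2}) as n → ∞; precisely, there exist constants K and N such that for all n ≥ N, ∑_{k=s(n)+1}^{n} a(k,n)·k·B(k) ≤ K·n^{(3+ρ−β)/2}. -/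
/-!
For `k > s` every factor satisfies `1 - x ≤ exp (-x)`, so
`a(k,n) ≤ exp (-(1 + ⋯ + s)/n) ≤ exp (-s²/(2n))`. With `s = ⌊n^q⌋`, `q = 2/(3+β)`, this is at most
`exp (-n^(2q-1)/8)`, and `2q - 1 = (1-β)/(3+β) > 0`. The tail has at most `n` terms, each at most
`n · C n^(ρ+1)` times this factor, and the stretched exponential beats the polynomial `C n^(ρ+3)`:
the tail sum even tends to `0`.
-/

open Real Finset Filter

/-- `a(k,n) = (1 - 1/n)(1 - 2/n) ⋯ (1 - (k-1)/n)`, with the empty product `a(1,n) = 1`. -/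
noncomputable def aProd (k n : ℕ) : ℝ :=
  ∏ j ∈ Finset.range (k - 1), (1 - ((j : ℝ) + 1) / n)

lemma sq_div_two_le_sum_range_succ (m : ℕ) :
    (m : ℝ) ^ 2 / 2 ≤ ∑ j ∈ range m, ((j : ℝ) + 1) := by
  induction m with
  | zero => simp
  | succ m ih =>
    rw [sum_range_succ]
    push_cast
    nlinarith

lemma aProd_factor_nonneg {k n j : ℕ} (hk : k ≤ n + 1) (hj : j ∈ range (k - 1)) :
    0 ≤ 1 - ((j : ℝ) + 1) / n := by
  have hjn : (j : ℝ) + 1 ≤ n := by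
    rw [mem_range] at hj
    exact_mod_cast (by omega : j + 1 ≤ n)
  linarith [div_le_one_of_le₀ hjn (Nat.cast_nonneg n)]

lemma aProd_le_exp_neg_sq {s k n : ℕ} (hsk : s < k) (hk : k ≤ n + 1) :
    aProd k n ≤ exp (-((s : ℝ) ^ 2 / (2 * n))) := by
  have hsum : (s : ℝ) ^ 2 / 2 ≤ ∑ j ∈ range (k - 1), ((j : ℝ) + 1) :=
    (sq_div_two_le_sum_range_succ s).trans <|
      sum_le_sum_of_subset_of_nonneg (range_subset_range.mpr (by omega)) fun _ _ _ => by positivity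
  calc aProd k n ≤ ∏ j ∈ range (k - 1), exp (-(((j : ℝ) + 1) / n)) :=
        prod_le_prod (fun _ hj => aProd_factor_nonneg hk hj)
          fun j _ => by linarith [add_one_le_exp (-(((j : ℝ) + 1) / n))]
    _ = exp (-((∑ j ∈ range (k - 1), ((j : ℝ) + 1)) / n)) := by
        rw [← exp_sum, sum_div, ← sum_neg_distrib]
    _ ≤ exp (-((s : ℝ) ^ 2 / (2 * n))) := by
        rw [div_mul_eq_div_div]
        gcongr

lemma sum_Icc_aProd_mul_le {p C : ℝ} (hp : 0 ≤ p) (hC : 0 ≤ C) {B : ℕ → ℝ}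
    (hB : ∀ k : ℕ, 1 ≤ k → 0 ≤ B k ∧ B k ≤ C * (k : ℝ) ^ p) (s n : ℕ) :
    ∑ k ∈ Icc (s + 1) n, aProd k n * k * B k ≤
      C * (n : ℝ) ^ (p + 2) * exp (-((s : ℝ) ^ 2 / (2 * n))) := by
  set E := exp (-((s : ℝ) ^ 2 / (2 * n)))
  have hterm : ∀ k ∈ Icc (s + 1) n, aProd k n * k * B k ≤ E * n * (C * (n : ℝ) ^ p) := by
    intro k hk
    obtain ⟨hsk, hkn⟩ := mem_Icc.mp hk
    obtain ⟨hB0, hBk⟩ := hB k (by omega)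
    have hkn' : (k : ℝ) ≤ n := by exact_mod_cast hkn
    calc aProd k n * k * B k ≤ E * n * B k := by
          gcongr
          exact aProd_le_exp_neg_sq hsk (by omega)
      _ ≤ E * n * (C * (n : ℝ) ^ p) := by
          gcongr
          exact hBk.trans (by gcongr)
  calc ∑ k ∈ Icc (s + 1) n, aProd k n * k * B k
      ≤ #(Icc (s + 1) n) • (E * n * (C * (n : ℝ) ^ p)) := sum_le_card_nsmul _ _ _ hterm
    _ ≤ n * (E * n * (C * (n : ℝ) ^ p)) := by
        rw [nsmul_eq_mul]
        gcongr
        rw [Nat.card_Icc]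
        exact_mod_cast (by omega : n + 1 - (s + 1) ≤ n)
    _ = C * (n : ℝ) ^ (p + 2) * E := by
        rw [rpow_add' n.cast_nonneg (by linarith), rpow_two]
        ring

lemma rpow_two_mul_sub_one_div_eight_le_natFloor_sq {q x : ℝ} (hx : 0 < x) (hq : 2 ≤ x ^ q) :
    x ^ (2 * q - 1) / 8 ≤ (⌊x ^ q⌋₊ : ℝ) ^ 2 / (2 * x) := by
  have hfloor : x ^ q / 2 ≤ ⌊x ^ q⌋₊ := by linarith [Nat.sub_one_lt_floor (x ^ q)]
  calc x ^ (2 * q - 1) / 8 = (x ^ q / 2) ^ 2 / (2 * x) := by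
        rw [rpow_sub_one hx.ne', mul_comm, rpow_mul hx.le, rpow_two]
        ring
    _ ≤ (⌊x ^ q⌋₊ : ℝ) ^ 2 / (2 * x) := by gcongr

lemma tendsto_rpow_mul_exp_neg_mul_rpow_atTop_nhds_zero (m : ℝ) {b α : ℝ} (hb : 0 < b)
    (hα : 0 < α) : Tendsto (fun x : ℝ => x ^ m * exp (-b * x ^ α)) atTop (nhds 0) := by
  refine ((tendsto_rpow_mul_exp_neg_mul_atTop_nhds_zero (m / α) b hb).comp
    (tendsto_rpow_atTop hα)).congr' ?_
  filter_upwards [eventually_gt_atTop 0] with x hx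
  rw [Function.comp_apply, ← rpow_mul hx.le, mul_div_cancel₀ _ hα.ne']

/-- If `0 ≤ B(k) ≤ C·k^{ρ+1}` for all `k ≥ 1` and `s(n) = ⌊n^{2/(3+β)}⌋`, then
`∑_{k=s(n)+1}^{n} a(k,n)·k·B(k) = O(n^{(3+ρ−β)/2})` as `n → ∞`. -/
theorem tail_sum_bound (ρ β C : ℝ) (hρ : 0 < ρ) (hβ0 : 0 < β) (hβ1 : β < 1) (hC : 0 < C)
    (B : ℕ → ℝ) (hB : ∀ k : ℕ, 1 ≤ k → 0 ≤ B k ∧ B k ≤ C * (k : ℝ) ^ (ρ + 1)) :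
    ∃ K : ℝ, ∃ N : ℕ, ∀ n ≥ N,
      ∑ k ∈ Finset.Icc (⌊(n : ℝ) ^ (2 / (3 + β))⌋₊ + 1) n, aProd k n * (k : ℝ) * B k ≤
        K * (n : ℝ) ^ ((3 + ρ - β) / 2) := by
  set q : ℝ := 2 / (3 + β)
  have hq : 0 < q := by positivity
  have hα : 0 < 2 * q - 1 := by
    have : 2 * q - 1 = (1 - β) / (3 + β) := by simp only [q]; field_simp; ring
    rw [this]
    exact div_pos (by linarith) (by linarith)
  have hdecay := ((tendsto_rpow_mul_exp_neg_mul_rpow_atTop_nhds_zero (ρ + 1 + 2)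
    (one_div_pos.mpr (by norm_num : (0 : ℝ) < 8)) hα).const_mul C).comp tendsto_natCast_atTop_atTop
  rw [mul_zero] at hdecay
  obtain ⟨N, hN⟩ := eventually_atTop.mp <| (hdecay.eventually_le_const zero_lt_one).and <|
    (((tendsto_rpow_atTop hq).comp tendsto_natCast_atTop_atTop).eventually_ge_atTop 2).and
      (eventually_ge_atTop 1)
  refine ⟨1, N, fun n hn => ?_⟩
  obtain ⟨hsmall, hnq, hn1⟩ := hN n hn
  have hn0 : (0 : ℝ) < n := by exact_mod_cast hn1
  calc ∑ k ∈ Icc (⌊(n : ℝ) ^ q⌋₊ + 1) n, aProd k n * k * B k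
      ≤ C * (n : ℝ) ^ (ρ + 1 + 2) * exp (-((⌊(n : ℝ) ^ q⌋₊ : ℝ) ^ 2 / (2 * n))) :=
        sum_Icc_aProd_mul_le (by linarith) hC.le hB _ n
    _ ≤ C * (n : ℝ) ^ (ρ + 1 + 2) * exp (-(1 / 8) * (n : ℝ) ^ (2 * q - 1)) := by
        gcongr
        linarith [rpow_two_mul_sub_one_div_eight_le_natFloor_sq hn0 hnq]
    _ ≤ 1 := by simpa only [Function.comp_apply, mul_assoc] using hsmall
    _ ≤ 1 * (n : ℝ) ^ ((3 + ρ - β) / 2) := by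
        rw [one_mul]
        exact one_le_rpow (by exact_mod_cast hn1) (by linarith)
end

section
/- Fix ρ > 0 and β ∈ (0,1), set r(n) = ⌊ln n⌋ and s(n) = ⌊n^{2/(3+β)}⌋, and define Σ_{2+ρ}(n) = ∑_{k=r(n)+1}^{s(n)} (1/√n)·(k/√n)^{2+ρ}·exp(−k²/(2n)) and I_{2+ρ}(n) = ∫_{(r(n)+1)/√n}^{(s(n)+1)/√n} x^{2+ρ}·exp(−x²/2) dx. Then Σ_{2+ρ}(n) = I_{2+ρ}(n) + O(n^{−1/2}) as n → ∞. -/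
/-! With `h = n^{-1/2}` and `f x = x^{2+ρ} e^{-x²/2}`, the sum is the left-endpoint Riemann sum
`∑ h f(kh)` of `f` over `[(r+1)h, (s+1)h]`. On each cell `f` deviates from its left-endpoint value
by at most the variation `∫ |f'|` over the cell, so the total error is at most `h ∫_0^∞ |f'|`, which
is finite because `f'` is a combination of Gaussian moments. The cut-offs enter only through
`⌊ln n⌋ ≤ ⌊n^{2/(3+β)}⌋`, which holds for large `n` since `ln` grows slower than any power. -/

open MeasureTheory Real Finset intervalIntegral Set Filter
open scoped Interval

section RiemannSum

variable {f f' : ℝ → ℝ}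

theorem abs_mul_sub_integral_le_mul_integral_abs_deriv (hf : ∀ x, HasDerivAt f (f' x) x)
    (hf' : Continuous f') (a : ℝ) {h : ℝ} (hh : 0 ≤ h) :
    |h * f a - ∫ x in a..a + h, f x| ≤ h * ∫ x in a..a + h, |f' x| := by
  have hfc : Continuous f := continuous_iff_continuousAt.2 fun x => (hf x).continuousAt
  have hosc : ∀ x ∈ Ι a (a + h), ‖f a - f x‖ ≤ ∫ t in a..a + h, |f' t| := by
    intro x hx
    rw [uIoc_of_le (by linarith)] at hx
    rw [Real.norm_eq_abs, abs_sub_comm,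
      ← integral_eq_sub_of_hasDerivAt (fun t _ => hf t) (hf'.intervalIntegrable _ _)]
    calc |∫ t in a..x, f' t| ≤ ∫ t in a..x, |f' t| := abs_integral_le_integral_abs hx.1.le
      _ ≤ ∫ t in a..a + h, |f' t| :=
        integral_mono_interval le_rfl hx.1.le hx.2 (ae_of_all _ fun t => abs_nonneg _)
          (hf'.abs.intervalIntegrable _ _)
  calc |h * f a - ∫ x in a..a + h, f x| = ‖∫ x in a..a + h, (f a - f x)‖ := by
        rw [integral_sub intervalIntegrable_const (hfc.intervalIntegrable _ _)]
        simp
    _ ≤ (∫ t in a..a + h, |f' t|) * |a + h - a| := norm_integral_le_of_norm_le_const hosc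
    _ = h * ∫ t in a..a + h, |f' t| := by rw [add_sub_cancel_left, abs_of_nonneg hh, mul_comm]

theorem abs_sum_mul_sub_integral_le_mul_integral_abs_deriv (hf : ∀ x, HasDerivAt f (f' x) x)
    (hf' : Continuous f') {h : ℝ} (hh : 0 ≤ h) {m M : ℕ} (hmM : m ≤ M) :
    |∑ k ∈ Ico m M, h * f (k * h) - ∫ x in m * h..M * h, f x| ≤
      h * ∫ x in m * h..M * h, |f' x| := by
  have hfc : Continuous f := continuous_iff_continuousAt.2 fun x => (hf x).continuousAt
  have hnode : ∀ k : ℕ, ((k + 1 : ℕ) : ℝ) * h = k * h + h := fun k => by push_cast; ring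
  rw [← sum_integral_adjacent_intervals_Ico (a := fun k : ℕ => k * h) hmM
      (fun k _ => hfc.intervalIntegrable _ _),
    ← sum_integral_adjacent_intervals_Ico (a := fun k : ℕ => k * h) hmM
      (fun k _ => hf'.abs.intervalIntegrable _ _),
    mul_sum, ← sum_sub_distrib]
  refine (abs_sum_le_sum_abs _ _).trans (sum_le_sum fun k _ => ?_)
  simpa only [hnode] using abs_mul_sub_integral_le_mul_integral_abs_deriv hf hf' (k * h) hh

theorem abs_sum_mul_sub_integral_le_mul_integral_Ioi (hf : ∀ x, HasDerivAt f (f' x) x)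
    (hf' : Continuous f') (hint : IntegrableOn f' (Ioi 0)) {h : ℝ} (hh : 0 ≤ h) {m M : ℕ}
    (hmM : m ≤ M) :
    |∑ k ∈ Ico m M, h * f (k * h) - ∫ x in m * h..M * h, f x| ≤ h * ∫ x in Ioi 0, |f' x| := by
  refine (abs_sum_mul_sub_integral_le_mul_integral_abs_deriv hf hf' hh hmM).trans
    (mul_le_mul_of_nonneg_left ?_ hh)
  rw [integral_of_le (by gcongr)]
  refine setIntegral_mono_set hint.abs (ae_of_all _ fun x => abs_nonneg _)
    (Eventually.of_forall fun x hx => (by positivity : (0:ℝ) ≤ m * h).trans_lt hx.1)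

end RiemannSum

section GaussianMoment

variable {p : ℝ}

theorem hasDerivAt_rpow_mul_exp_neg_sq_div_two (hp : 1 ≤ p) (x : ℝ) :
    HasDerivAt (fun x => x ^ p * exp (-x ^ 2 / 2))
      (p * x ^ (p - 1) * exp (-x ^ 2 / 2) - x ^ p * x * exp (-x ^ 2 / 2)) x := by
  have hexp : HasDerivAt (fun x => exp (-x ^ 2 / 2)) (exp (-x ^ 2 / 2) * -x) x := by
    have h2 : HasDerivAt (fun x : ℝ => -x ^ 2 / 2) (-x) x :=
      ((hasDerivAt_pow 2 x).fun_neg.div_const 2).congr_deriv (by push_cast; ring)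
    exact h2.exp
  exact ((hasDerivAt_rpow_const (p := p) (Or.inr hp)).fun_mul hexp).congr_deriv (by ring)

theorem continuous_deriv_rpow_mul_exp_neg_sq_div_two (hp : 1 ≤ p) :
    Continuous fun x => p * x ^ (p - 1) * exp (-x ^ 2 / 2) - x ^ p * x * exp (-x ^ 2 / 2) := by
  fun_prop (disch := linarith)

theorem integrableOn_deriv_rpow_mul_exp_neg_sq_div_two (hp : 1 ≤ p) :
    IntegrableOn (fun x => p * x ^ (p - 1) * exp (-x ^ 2 / 2) - x ^ p * x * exp (-x ^ 2 / 2))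
      (Ioi 0) := by
  have hmoment : ∀ q : ℝ, -1 < q → IntegrableOn (fun x : ℝ => x ^ q * exp (-x ^ 2 / 2)) (Ioi 0) :=
    fun q hq => (integrableOn_rpow_mul_exp_neg_mul_sq (b := 1 / 2) (by norm_num) hq).congr_fun
      (fun x _ => by ring_nf) measurableSet_Ioi
  refine IntegrableOn.congr_fun
    (((hmoment (p - 1) (by linarith)).const_mul p).sub (hmoment (p + 1) (by linarith)))
    (fun x (hx : 0 < x) => ?_) measurableSet_Ioi
  simp only [Pi.sub_apply, rpow_add_one hx.ne']
  ring

end GaussianMoment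

theorem eventually_log_le_rpow {e : ℝ} (he : 0 < e) : ∀ᶠ n : ℕ in atTop, log n ≤ (n : ℝ) ^ e := by
  filter_upwards [tendsto_natCast_atTop_atTop.eventually
    ((isLittleO_log_rpow_atTop he).bound one_pos)] with n hn
  simpa [abs_of_nonneg (by positivity : (0 : ℝ) ≤ (n : ℝ) ^ e)] using (le_abs_self _).trans hn

theorem sum_eq_integral_add_error_general (ρ β : ℝ) (hρ : 0 < ρ) (hβ0 : 0 < β) :
    ∃ K : ℝ, ∃ N : ℕ, ∀ n ≥ N,
      |(∑ k ∈ Finset.Icc (⌊Real.log n⌋₊ + 1) ⌊(n : ℝ) ^ (2 / (3 + β))⌋₊,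
            (1 / Real.sqrt n) * ((k : ℝ) / Real.sqrt n) ^ (2 + ρ) *
              Real.exp (-(k : ℝ) ^ 2 / (2 * n))) -
          ∫ x in (((⌊Real.log n⌋₊ : ℝ) + 1) / Real.sqrt n)..
              (((⌊(n : ℝ) ^ (2 / (3 + β))⌋₊ : ℝ) + 1) / Real.sqrt n),
            x ^ (2 + ρ) * Real.exp (-x ^ 2 / 2)| ≤
        K * (n : ℝ) ^ (-(1 : ℝ) / 2) := by
  have hp : 1 ≤ 2 + ρ := by linarith
  obtain ⟨N, hN⟩ := eventually_atTop.1 (eventually_log_le_rpow (e := 2 / (3 + β)) (by positivity))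
  refine ⟨∫ x in Ioi 0,
    |(2 + ρ) * x ^ (2 + ρ - 1) * exp (-x ^ 2 / 2) - x ^ (2 + ρ) * x * exp (-x ^ 2 / 2)|, N,
    fun n hn => ?_⟩
  have hrs : ⌊log n⌋₊ + 1 ≤ ⌊(n : ℝ) ^ (2 / (3 + β))⌋₊ + 1 := by
    gcongr
    exact hN n hn
  have hriemann := abs_sum_mul_sub_integral_le_mul_integral_Ioi
    (hasDerivAt_rpow_mul_exp_neg_sq_div_two hp) (continuous_deriv_rpow_mul_exp_neg_sq_div_two hp)
    (integrableOn_deriv_rpow_mul_exp_neg_sq_div_two hp) (h := 1 / √n) (by positivity) hrs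
  rw [Finset.Ico_add_one_right_eq_Icc] at hriemann
  have hmesh : 1 / √n = (n : ℝ) ^ (-(1 : ℝ) / 2) := by
    rw [sqrt_eq_rpow, one_div, ← rpow_neg (Nat.cast_nonneg n), neg_div]
  rw [← hmesh, mul_comm _ (1 / √(n : ℝ))]
  convert hriemann using 3
  · refine sum_congr rfl fun k _ => ?_
    rw [mul_one_div, div_pow, sq_sqrt (Nat.cast_nonneg n), mul_assoc, neg_div, neg_div, div_div, mul_comm (n : ℝ)]
  · congr 1 <;> push_cast <;> ring

/-- For fixed `ρ > 0`, `β ∈ (0,1)`, with `r(n) = ⌊ln n⌋` and `s(n) = ⌊n^{2/(3+β)}⌋`,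
the sum `Σ_{2+ρ}(n) = ∑_{k=r(n)+1}^{s(n)} n^{-1/2}·(k/√n)^{2+ρ}·exp(−k²/(2n))` and the
integral `I_{2+ρ}(n) = ∫_{(r(n)+1)/√n}^{(s(n)+1)/√n} x^{2+ρ}·exp(−x²/2) dx` satisfy
`Σ_{2+ρ}(n) = I_{2+ρ}(n) + O(n^{−1/2})`. -/
theorem sum_eq_integral_add_error (ρ β : ℝ) (hρ : 0 < ρ) (hβ0 : 0 < β) (hβ1 : β < 1) :
    ∃ K : ℝ, ∃ N : ℕ, ∀ n ≥ N,
      |(∑ k ∈ Finset.Icc (⌊Real.log n⌋₊ + 1) ⌊(n : ℝ) ^ (2 / (3 + β))⌋₊,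
            (1 / Real.sqrt n) * ((k : ℝ) / Real.sqrt n) ^ (2 + ρ) *
              Real.exp (-(k : ℝ) ^ 2 / (2 * n))) -
          ∫ x in (((⌊Real.log n⌋₊ : ℝ) + 1) / Real.sqrt n)..
              (((⌊(n : ℝ) ^ (2 / (3 + β))⌋₊ : ℝ) + 1) / Real.sqrt n),
            x ^ (2 + ρ) * Real.exp (-x ^ 2 / 2)| ≤
        K * (n : ℝ) ^ (-(1 : ℝ) / 2) :=
  sum_eq_integral_add_error_general ρ β hρ hβ0
end
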